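/- arXiv:2603.03381 — 2 statements merged into one kernel-verified Lean document; each statement's English description precedes it below -/
import Mathlib

section
/- In the quantum integer notation [r] = (v^r - v^{-r})/(v - v^{-1}) with Gaussian binomial coefficients, for any integers b ≥ 0 and 0 ≤ v1, v2 with v1 + v2 ≤ b + 1, one has [b choose v1]·[b choose v2] − [b choose v1−1]·[b choose v2−1] = [b+1 choose v1]·[b+1 choose v2]·([b+1−v1−v2]/[b+1]). -/
/-!
Both Gaussian binomials of level `b` are determined by those of level `b + 1`:
`[b+1, k] [b+1-k] = [b, k] [b+1]` and `[b+1, k] [k] = [b+1] [b, k-1]`, valid for every `k : ℤ`.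
Substituting them, and dividing by `[b+1] ≠ 0`, the identity becomes the quantum-integer identity
`[m-a] [m-c] - [a] [c] = [m] [m-a-c]` at `m = b + 1`, a Laurent-polynomial identity in `v`.
-/

noncomputable section

def v : RatFunc ℚ := RatFunc.X

def qint (r : ℤ) : RatFunc ℚ := (v ^ r - v ^ (-r)) / (v - v⁻¹)

def qfact (n : ℕ) : RatFunc ℚ := ∏ i ∈ Finset.range n, qint ((i : ℤ) + 1)

def qbinom (m r : ℤ) : RatFunc ℚ :=
  if r < 0 then 0
  else (∏ i ∈ Finset.range r.toNat, qint (m - (i : ℤ))) / qfact r.toNat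

open Finset

lemma v_ne_zero : v ≠ 0 := RatFunc.X_ne_zero

lemma v_pow_ne_one {n : ℕ} (hn : n ≠ 0) : v ^ n ≠ 1 := by
  intro h
  have hdeg := congrArg RatFunc.intDegree h
  rw [v, ← RatFunc.algebraMap_X, ← map_pow, RatFunc.intDegree_polynomial, RatFunc.intDegree_one,
    Polynomial.natDegree_X_pow] at hdeg
  exact hn (by exact_mod_cast hdeg)

lemma v_zpow_ne_one {n : ℤ} (hn : n ≠ 0) : v ^ n ≠ 1 := by
  obtain ⟨k, rfl | rfl⟩ := Int.eq_nat_or_neg n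
  · exact_mod_cast v_pow_ne_one (by omega)
  · rw [zpow_neg, inv_ne_one, zpow_natCast]
    exact v_pow_ne_one (by omega)

lemma v_zpow_sub_zpow_neg_ne_zero {r : ℤ} (hr : r ≠ 0) : v ^ r - v ^ (-r) ≠ 0 := by
  intro h
  apply v_zpow_ne_one (n := r - -r) (by omega)
  rw [zpow_sub₀ v_ne_zero, sub_eq_zero.mp h, div_self (zpow_ne_zero _ v_ne_zero)]

lemma qint_zero : qint 0 = 0 := by simp [qint]

lemma qint_ne_zero {r : ℤ} (hr : r ≠ 0) : qint r ≠ 0 :=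
  div_ne_zero (v_zpow_sub_zpow_neg_ne_zero hr)
    (by simpa using v_zpow_sub_zpow_neg_ne_zero one_ne_zero)

lemma qint_sub_mul_qint_sub_sub_qint_mul_qint (m a c : ℤ) :
    qint (m - a) * qint (m - c) - qint a * qint c = qint m * qint (m - a - c) := by
  simp only [qint, div_mul_div_comm, ← sub_div]
  congr 1
  have hv := v_ne_zero
  simp only [sub_sub, zpow_sub₀ v_ne_zero, zpow_add₀ v_ne_zero, zpow_neg]
  field_simp
  ring

lemma qfact_succ (n : ℕ) : qfact (n + 1) = qfact n * qint (n + 1) := prod_range_succ _ n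

lemma qbinom_of_neg (m : ℤ) {k : ℤ} (hk : k < 0) : qbinom m k = 0 := if_pos hk

lemma qbinom_natCast (m : ℤ) (n : ℕ) :
    qbinom m n = (∏ i ∈ range n, qint (m - i)) / qfact n := by
  simp [qbinom]

lemma qbinom_succ_mul_qint_sub (m k : ℤ) :
    qbinom (m + 1) k * qint (m + 1 - k) = qbinom m k * qint (m + 1) := by
  rcases lt_or_ge k 0 with hk | hk
  · simp [qbinom_of_neg _ hk]
  obtain ⟨n, rfl⟩ := Int.eq_ofNat_of_zero_le hk
  rw [qbinom_natCast, qbinom_natCast, div_mul_eq_mul_div, div_mul_eq_mul_div]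
  congr 1
  calc (∏ i ∈ range n, qint (m + 1 - i)) * qint (m + 1 - n)
      = ∏ i ∈ range (n + 1), qint (m + 1 - i) := (prod_range_succ _ n).symm
    _ = (∏ i ∈ range n, qint (m - i)) * qint (m + 1) := by
      rw [prod_range_succ']; push_cast; simp [add_sub_add_right_eq_sub]

lemma qbinom_succ_mul_qint (m k : ℤ) :
    qbinom (m + 1) k * qint k = qint (m + 1) * qbinom m (k - 1) := by
  rcases le_or_gt k 0 with hk | hk
  · rw [qbinom_of_neg m (by omega), mul_zero]
    obtain hk | rfl := hk.lt_or_eq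
    · rw [qbinom_of_neg _ hk, zero_mul]
    · rw [qint_zero, mul_zero]
  obtain ⟨n, rfl⟩ : ∃ n : ℕ, k = n + 1 := ⟨(k - 1).toNat, by omega⟩
  have hq : qint (n + 1) ≠ 0 := qint_ne_zero (by omega)
  rw [add_sub_cancel_right, ← Nat.cast_succ, qbinom_natCast, qbinom_natCast, qfact_succ,
    prod_range_succ', ← div_div, Nat.cast_succ, div_mul_cancel₀ _ hq]
  push_cast
  simp only [add_sub_add_right_eq_sub, sub_zero]
  ring

theorem qbinom_diff_identity_general (b v1 v2 : ℤ) (hb : 0 ≤ b) :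
    qbinom b v1 * qbinom b v2 - qbinom b (v1 - 1) * qbinom b (v2 - 1)
      = qbinom (b + 1) v1 * qbinom (b + 1) v2 * (qint (b + 1 - v1 - v2) / qint (b + 1)) := by
  have hb1 : qint (b + 1) ≠ 0 := qint_ne_zero (by omega)
  have lower (k : ℤ) : qbinom b k = qbinom (b + 1) k * qint (b + 1 - k) / qint (b + 1) := by
    rw [eq_div_iff hb1, qbinom_succ_mul_qint_sub]
  have lower_pred (k : ℤ) : qbinom b (k - 1) = qbinom (b + 1) k * qint k / qint (b + 1) := by
    rw [eq_div_iff hb1, qbinom_succ_mul_qint, mul_comm]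
  rw [lower v1, lower v2, lower_pred v1, lower_pred v2]
  field_simp
  linear_combination qbinom (b + 1) v1 * qbinom (b + 1) v2 *
    qint_sub_mul_qint_sub_sub_qint_mul_qint (b + 1) v1 v2

/-- for `b ≥ 0`, `0 ≤ v₁, v₂` with `v₁ + v₂ ≤ b + 1`,
`[b,v₁][b,v₂] − [b,v₁−1][b,v₂−1] = [b+1,v₁][b+1,v₂]·[b+1−v₁−v₂]/[b+1]`. -/
theorem qbinom_diff_identity (b v1 v2 : ℤ) (hb : 0 ≤ b) (h1 : 0 ≤ v1) (h2 : 0 ≤ v2)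
    (h : v1 + v2 ≤ b + 1) :
    qbinom b v1 * qbinom b v2 - qbinom b (v1 - 1) * qbinom b (v2 - 1)
      = qbinom (b + 1) v1 * qbinom (b + 1) v2 * (qint (b + 1 - v1 - v2) / qint (b + 1)) :=
  qbinom_diff_identity_general b v1 v2 hb
end
end

section
/- In Ũ_v(sl₂), define C^{(0)} = 1, C^{(1)} = C = EF − v^{−1}K − vK', and inductively C·C^{(m)} = C^{(m+1)} + KK'·C^{(m−1)} for m ≥ 1. Then each C^{(m)} is fixed by the bar anti-involution (which fixes E, F, K, K' and sends v ↦ v^{−1}). -/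
noncomputable section

/-- in `Ũ_v(sl₂)`, the elements `C^{(m)}` defined by `C^{(0)} = 1`,
`C^{(1)} = C = EF − v⁻¹K − vK'` and `C·C^{(m)} = C^{(m+1)} + KK'·C^{(m−1)}` for `m ≥ 1`
are all fixed by the bar anti-involution. -/
theorem casimir_powers_bar_invariant (A : Type*) [Ring A] [Algebra (RatFunc ℚ) A]
    (E F K K' Kinv K'inv : A)
    (hEF : E * F - F * E = (v⁻¹ - v) • (K - K'))
    (hKK' : K * K' = K' * K)
    (hKE : K * E = (v ^ 2) • (E * K))
    (hKF : K * F = (v⁻¹ ^ 2) • (F * K))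
    (hK'E : K' * E = (v⁻¹ ^ 2) • (E * K'))
    (hK'F : K' * F = (v ^ 2) • (F * K'))
    (hK : K * Kinv = 1) (hK2 : Kinv * K = 1)
    (hK' : K' * K'inv = 1) (hK'2 : K'inv * K' = 1)
    -- the bar anti-involution: fixes `E, F, K, K'` and sends `v^{1/2} ↦ v^{-1/2}`
    (bar : A → A)
    (hbadd : ∀ x y, bar (x + y) = bar x + bar y)
    (hbmul : ∀ x y, bar (x * y) = bar y * bar x)
    (hbone : bar 1 = 1)
    (hbq : ∀ (q : ℚ) (x : A), bar ((q : RatFunc ℚ) • x) = (q : RatFunc ℚ) • bar x)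
    (hbv : ∀ (n : ℤ) (x : A), bar ((v ^ n) • x) = (v ^ (-n)) • bar x)
    (hbE : bar E = E) (hbF : bar F = F) (hbK : bar K = K) (hbK' : bar K' = K')
    -- the inductively defined elements `C^{(m)}`
    (C : ℕ → A)
    (hC0 : C 0 = 1)
    (hC1 : C 1 = E * F - v⁻¹ • K - v • K')
    (hCrec : ∀ m : ℕ, 1 ≤ m →
      (E * F - v⁻¹ • K - v • K') * C m = C (m + 1) + (K * K') * C (m - 1)) :
    ∀ m : ℕ, bar (C m) = C m := by
  obtain ⟨c, hc⟩ : ∃ x : A, x = E * F - v⁻¹ • K - v • K' := ⟨_, rfl⟩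
  rw [← hc] at hC1 hCrec
  have hvne : v ≠ 0 := RatFunc.X_ne_zero
  -- bar respects subtraction
  have hbsub : ∀ x y : A, bar (x - y) = bar x - bar y := by
    intro x y
    have hm : ∀ z : A, ((-1 : ℚ) : RatFunc ℚ) • z = -z := by
      intro z; push_cast; rw [neg_one_smul]
    rw [sub_eq_add_neg, ← hm, hbadd, hbq, hm, ← sub_eq_add_neg]
  have hvK : bar (v⁻¹ • K) = v • K := by
    have h1 : v⁻¹ • K = (v ^ (-1 : ℤ)) • K := by rw [zpow_neg, zpow_one]
    rw [h1, hbv, hbK]; norm_num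
  have hvK' : bar (v • K') = v⁻¹ • K' := by
    have h1 : v • K' = (v ^ (1 : ℤ)) • K' := by rw [zpow_one]
    rw [h1, hbv, hbK']; norm_num [zpow_neg, zpow_one]
  have hbZ : bar (K * K') = K * K' := by rw [hbmul, hbK, hbK', ← hKK']
  -- bar of the Casimir
  have key : c = F * E - v • K - v⁻¹ • K' := by
    have h : E * F - F * E = (v⁻¹ • K - v⁻¹ • K') - (v • K - v • K') := by
      rw [hEF, sub_smul, smul_sub, smul_sub]
    have h2 : E * F = F * E + ((v⁻¹ • K - v⁻¹ • K') - (v • K - v • K')) := by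
      rw [← h]; abel
    rw [hc, h2]; abel
  have hbarc : bar c = c := by
    rw [hc, hbsub, hbsub, hbmul, hbE, hbF, hvK, hvK', ← key]; exact hc
  -- commutation of K*K' with generators
  have hs1 : (v⁻¹ ^ 2) * (v ^ 2) = 1 := by field_simp
  have hs2 : (v ^ 2) * (v⁻¹ ^ 2) = 1 := by field_simp
  have hZE : (K * K') * E = E * (K * K') := by
    calc (K * K') * E = K * (K' * E) := by rw [mul_assoc]
      _ = K * ((v⁻¹ ^ 2) • (E * K')) := by rw [hK'E]
      _ = (v⁻¹ ^ 2) • (K * E * K') := by rw [mul_smul_comm, mul_assoc]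
      _ = (v⁻¹ ^ 2) • ((v ^ 2) • (E * K) * K') := by rw [hKE]
      _ = (v⁻¹ ^ 2) • ((v ^ 2) • (E * (K * K'))) := by rw [smul_mul_assoc, mul_assoc]
      _ = ((v⁻¹ ^ 2) * (v ^ 2)) • (E * (K * K')) := by rw [smul_smul]
      _ = E * (K * K') := by rw [hs1, one_smul]
  have hZF : (K * K') * F = F * (K * K') := by
    calc (K * K') * F = K * (K' * F) := by rw [mul_assoc]
      _ = K * ((v ^ 2) • (F * K')) := by rw [hK'F]
      _ = (v ^ 2) • (K * F * K') := by rw [mul_smul_comm, mul_assoc]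
      _ = (v ^ 2) • ((v⁻¹ ^ 2) • (F * K) * K') := by rw [hKF]
      _ = (v ^ 2) • ((v⁻¹ ^ 2) • (F * (K * K'))) := by rw [smul_mul_assoc, mul_assoc]
      _ = ((v ^ 2) * (v⁻¹ ^ 2)) • (F * (K * K')) := by rw [smul_smul]
      _ = F * (K * K') := by rw [hs2, one_smul]
  have hZK : (K * K') * K = K * (K * K') := by
    rw [mul_assoc, ← hKK', ← mul_assoc]
  have hZK' : (K * K') * K' = K' * (K * K') := by
    conv_lhs => rw [hKK', mul_assoc]
  have hZc : (K * K') * c = c * (K * K') := by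
    rw [hc, mul_sub, mul_sub, sub_mul, sub_mul]
    congr 1
    · congr 1
      · rw [← mul_assoc, hZE, mul_assoc, hZF, ← mul_assoc]
      · rw [mul_smul_comm, hZK, smul_mul_assoc]
    · rw [mul_smul_comm, hZK', smul_mul_assoc]
  -- main induction
  have main : ∀ n : ℕ,
      (bar (C n) = C n ∧ c * C n = C n * c ∧ (K * K') * C n = C n * (K * K')) ∧
      (bar (C (n+1)) = C (n+1) ∧ c * C (n+1) = C (n+1) * c ∧
        (K * K') * C (n+1) = C (n+1) * (K * K')) := by
    intro n
    induction n with
    | zero =>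
      refine ⟨⟨?_, ?_, ?_⟩, ?_, ?_, ?_⟩
      · rw [hC0, hbone]
      · rw [hC0, mul_one, one_mul]
      · rw [hC0, mul_one, one_mul]
      · rw [hC1, hbarc]
      · rw [hC1]
      · rw [hC1, hZc]
    | succ n ih =>
      obtain ⟨⟨ihb, ihc, ihZ⟩, ihb', ihc', ihZ'⟩ := ih
      have hrec := hCrec (n+1) (by omega)
      have hdef : C (n+2) = c * C (n+1) - (K * K') * C n := by
        have : (n + 1) - 1 = n := rfl
        rw [this] at hrec
        rw [hrec]; abel
      have t1 : c * (c * C (n+1)) = (c * C (n+1)) * c := by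
        calc c * (c * C (n+1)) = c * (C (n+1) * c) := by rw [ihc']
          _ = (c * C (n+1)) * c := by rw [← mul_assoc]
      have t2 : c * ((K * K') * C n) = ((K * K') * C n) * c := by
        calc c * ((K * K') * C n) = (c * (K * K')) * C n := by rw [← mul_assoc]
          _ = ((K * K') * c) * C n := by rw [← hZc]
          _ = (K * K') * (c * C n) := by rw [mul_assoc]
          _ = (K * K') * (C n * c) := by rw [ihc]
          _ = ((K * K') * C n) * c := by rw [← mul_assoc]
      have u1 : (K * K') * (c * C (n+1)) = (c * C (n+1)) * (K * K') := by
        calc (K * K') * (c * C (n+1)) = ((K * K') * c) * C (n+1) := by rw [← mul_assoc]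
          _ = (c * (K * K')) * C (n+1) := by rw [hZc]
          _ = c * ((K * K') * C (n+1)) := by rw [mul_assoc]
          _ = c * (C (n+1) * (K * K')) := by rw [ihZ']
          _ = (c * C (n+1)) * (K * K') := by rw [← mul_assoc]
      have u2 : (K * K') * ((K * K') * C n) = ((K * K') * C n) * (K * K') := by
        calc (K * K') * ((K * K') * C n) = (K * K') * (C n * (K * K')) := by rw [ihZ]
          _ = ((K * K') * C n) * (K * K') := by rw [← mul_assoc]
      refine ⟨⟨ihb', ihc', ihZ'⟩, ?_, ?_, ?_⟩
      · rw [hdef, hbsub, hbmul, ihb', hbarc, hbmul, hbZ, ihb, ← ihc', ← ihZ]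
      · rw [hdef, mul_sub, sub_mul, t1, t2]
      · rw [hdef, mul_sub, sub_mul, u1, u2]
  exact fun m => (main m).1.1
end
end
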